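/- arXiv:2206.02740 — 5 statements merged into one kernel-verified Lean document; each statement's English description precedes it below -/
import Mathlib

section
/- Let f be a homeomorphism of a metric space S, let q ≥ 1 be an integer and let g = f^q. If there is a point z ∈ S such that α_f(z) = S, then the union of the sets α_g(f^{−r}(z)) for r = 0, 1, …, q−1 equals S. -/
open Filter Topology Set

noncomputable section

/-- Group structure on the group of self-homeomorphisms of a topological space,
so that `f ^ n` denotes the `n`-th iterate (with `n : ℕ` or `n : ℤ`). -/
instance Homeomorph.instGroupSelf {X : Type*} [TopologicalSpace X] : Group (X ≃ₜ X) where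
  mul f g := g.trans f
  one := Homeomorph.refl X
  inv := Homeomorph.symm
  mul_assoc f g h := Homeomorph.ext fun _ => rfl
  one_mul f := Homeomorph.ext fun _ => rfl
  mul_one f := Homeomorph.ext fun _ => rfl
  inv_mul_cancel f := Homeomorph.ext fun x => f.symm_apply_apply x

/-- The two-torus `T² = ℝ²/ℤ²`. -/
abbrev Torus : Type := AddCircle (1 : ℝ) × AddCircle (1 : ℝ)

/-- The vertical annulus `A = (ℝ/ℤ) × ℝ`. -/
abbrev VertAnnulus : Type := AddCircle (1 : ℝ) × ℝ

/-- The canonical covering projection `ℝ² → T²`. -/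
def torusProj : ℝ × ℝ → Torus :=
  fun p => ((p.1 : AddCircle (1 : ℝ)), (p.2 : AddCircle (1 : ℝ)))

/-- The covering projection from the vertical annulus to the torus. -/
def annProj : VertAnnulus → Torus := fun p => (p.1, (p.2 : AddCircle (1 : ℝ)))

/-- A homeomorphism is (topologically) transitive if it has a dense orbit. -/
def IsTransitive {X : Type*} [TopologicalSpace X] (f : X ≃ₜ X) : Prop :=
  ∃ z : X, Dense (Set.range fun n : ℤ => (f ^ n) z)

/-- `g` and `h` are isotopic: there is a continuous path of homeomorphisms
joining `h` (at time 0) to `g` (at time 1). -/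
def Isotopic {X : Type*} [TopologicalSpace X] (g h : X → X) : Prop :=
  ∃ H : ℝ → X → X, Continuous (fun p : ℝ × X => H p.1 p.2) ∧
    (∀ t : ℝ, ∃ e : X ≃ₜ X, H t = ⇑e) ∧ H 0 = h ∧ H 1 = g

/-- The Bernoulli shift on `Σ = {0,…,r−1}^ℤ`. -/
def bernoulliShift (r : ℕ) : (ℤ → Fin r) → (ℤ → Fin r) := fun s i => s (i + 1)

/-- `Δ` is a topological horseshoe for the homeomorphism `f`. -/
def IsTopologicalHorseshoe {X : Type*} [TopologicalSpace X] (f : X ≃ₜ X) (Δ : Set X) : Prop :=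
  IsCompact Δ ∧
  ∃ q : ℕ, 1 ≤ q ∧ ⇑(f ^ q) '' Δ = Δ ∧
    ∃ (Y : Type) (_ : TopologicalSpace Y) (_ : CompactSpace Y) (_ : T2Space Y)
      (g : Y → Y) (r : ℕ) (π₁ : Y → X) (π₂ : Y → (ℤ → Fin r)),
      2 ≤ r ∧ Continuous g ∧
      Continuous π₁ ∧ Set.range π₁ = Δ ∧ (∀ y, π₁ (g y) = (f ^ q) (π₁ y)) ∧
      (∃ B : ℕ, ∀ x : X, (π₁ ⁻¹' {x}).Finite ∧ (π₁ ⁻¹' {x}).ncard ≤ B) ∧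
      Continuous π₂ ∧ Function.Surjective π₂ ∧
      (∀ y, π₂ (g y) = bernoulliShift r (π₂ y)) ∧
      (∀ (n : ℕ) (s : ℤ → Fin r), (bernoulliShift r)^[n] s = s →
        ∃ y : Y, π₂ y = s ∧ g^[n] y = y)

/-- `f` has a topological horseshoe. -/
def HasTopologicalHorseshoe {X : Type*} [TopologicalSpace X] (f : X ≃ₜ X) : Prop :=
  ∃ Δ : Set X, IsTopologicalHorseshoe f Δ

/-- The ω-limit set `ω_f(z) = ⋂_{k≥0} closure {f^n(z) : n ≥ k}`. -/
def omegaLimitOf {X : Type*} [TopologicalSpace X] (f : X → X) (z : X) : Set X :=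
  ⋂ k : ℕ, closure ((fun n : ℕ => f^[n] z) '' Set.Ici k)

/-- The α-limit set `α_f(z) = ⋂_{k≤0} closure {f^n(z) : n ≤ k}` of a homeomorphism,
i.e. the ω-limit set of the inverse homeomorphism. -/
def alphaLimitOf {X : Type*} [TopologicalSpace X] (f : X ≃ₜ X) (z : X) : Set X :=
  omegaLimitOf (⇑f.symm) z

/-- `G` is a lift of the torus homeomorphism `g` to the plane. -/
def IsLiftR2 (g : Torus ≃ₜ Torus) (G : (ℝ × ℝ) ≃ₜ (ℝ × ℝ)) : Prop :=
  ∀ p : ℝ × ℝ, torusProj (G p) = g (torusProj p)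

/-- `H` is a lift of the torus homeomorphism `g` to the vertical annulus. -/
def IsLiftAnn (g : Torus ≃ₜ Torus) (H : VertAnnulus ≃ₜ VertAnnulus) : Prop :=
  ∀ p : VertAnnulus, annProj (H p) = g (annProj p)

/-- The Misiurewicz–Ziemian rotation set of a lift `G` of a torus homeomorphism:
all limits of sequences `(G^{n_k}(z_k) − z_k)/n_k` with `n_k → ∞`. -/
def rotSet (G : (ℝ × ℝ) ≃ₜ (ℝ × ℝ)) : Set (ℝ × ℝ) :=
  {v | ∃ (n : ℕ → ℕ) (z : ℕ → ℝ × ℝ), StrictMono n ∧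
    Filter.Tendsto (fun k => ((n k : ℝ))⁻¹ • ((G ^ (n k)) (z k) - z k))
      Filter.atTop (nhds v)}

/-- A set is a non-degenerate line segment with rational slope: it is a segment with
distinct endpoints whose direction is a real multiple of a nonzero integer vector. -/
def IsRationalSlopeSegment (ρ : Set (ℝ × ℝ)) : Prop :=
  ∃ a b : ℝ × ℝ, a ≠ b ∧ ρ = segment ℝ a b ∧
    ∃ v : ℤ × ℤ, v ≠ (0, 0) ∧ ∃ t : ℝ, b - a = t • (((v.1 : ℝ), (v.2 : ℝ)) : ℝ × ℝ)

/-- A set is a non-degenerate horizontal segment (direction `±(1,0)`). -/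
def IsHorizontalSegment (ρ : Set (ℝ × ℝ)) : Prop :=
  ∃ a b : ℝ × ℝ, a ≠ b ∧ ρ = segment ℝ a b ∧ a.2 = b.2

/-- The linear torus map induced by an integer matrix. -/
def matrixTorusMap (A : Matrix (Fin 2) (Fin 2) ℤ) : Torus → Torus :=
  fun p => (A 0 0 • p.1 + A 0 1 • p.2, A 1 0 • p.1 + A 1 1 • p.2)

/-- The linear planar map induced by an integer matrix. -/
def matMap (A : Matrix (Fin 2) (Fin 2) ℤ) : ℝ × ℝ → ℝ × ℝ :=
  fun p => ((A 0 0 : ℝ) * p.1 + (A 0 1 : ℝ) * p.2, (A 1 0 : ℝ) * p.1 + (A 1 1 : ℝ) * p.2)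

/-- `g` is isotopic to a Dehn twist: it is isotopic to the linear map induced by a matrix
`A ∈ GL(2,ℤ)` conjugate (in GL(2,ℤ)) to `[[1, m], [0, 1]]` for some `m ≠ 0`. -/
def IsotopicToDehnTwist (g : Torus ≃ₜ Torus) : Prop :=
  ∃ (m : ℤ) (A P : Matrix (Fin 2) (Fin 2) ℤ), m ≠ 0 ∧ IsUnit A.det ∧ IsUnit P.det ∧
    A * P = P * !![1, m; 0, 1] ∧ Isotopic (⇑g) (matrixTorusMap A)

/-- The vertical rotation set of an annulus homeomorphism `H`:
`ρ_V(H) = ⋂_{k≥1} closure ( ⋃_{n≥k} { pr₂(Hⁿ(z) − z)/n : z ∈ A } )`. -/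
def vertRotSet (H : VertAnnulus ≃ₜ VertAnnulus) : Set ℝ :=
  ⋂ k : ℕ, closure (⋃ n : ℕ, ⋃ _ : k + 1 ≤ n,
    {x : ℝ | ∃ z : VertAnnulus, x = (((H ^ n) z).2 - z.2) / n})

/-- `z` is a non-wandering point of `f`. -/
def IsNonWanderingPt {X : Type*} [TopologicalSpace X] (f : X → X) (z : X) : Prop :=
  ∀ U ∈ 𝓝 z, ∃ n : ℕ, 1 ≤ n ∧ (f^[n] '' U ∩ U).Nonempty

/-- The Euclidean inner product on `ℝ²`. -/
def dot2 (u v : ℝ × ℝ) : ℝ := u.1 * v.1 + u.2 * v.2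

/-- The Euclidean normalization of a vector of `ℝ²`. -/
def normalize2 (u : ℝ × ℝ) : ℝ × ℝ := (Real.sqrt (u.1 ^ 2 + u.2 ^ 2))⁻¹ • u

/-- There is a Birkhoff connection from `z₁` to `z₂` for `f`. -/
def BirkhoffConnection {X : Type*} [TopologicalSpace X] (f : X → X) (z₁ z₂ : X) : Prop :=
  ∀ W₁ ∈ 𝓝 z₁, ∀ W₂ ∈ 𝓝 z₂, ∃ n : ℕ, 1 ≤ n ∧ (W₁ ∩ f^[n] ⁻¹' W₂).Nonempty

/-- `c : ℤ/pℤ → X` is a Birkhoff cycle for `f`. -/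
def IsBirkhoffCycle {X : Type*} [TopologicalSpace X] (f : X → X) {p : ℕ} (c : ZMod p → X) :
    Prop :=
  0 < p ∧ ∀ i : ZMod p, BirkhoffConnection f (c i) (c (i + 1))


lemma hom_coe_pow' {X : Type*} [TopologicalSpace X] (f : X ≃ₜ X) (n : ℕ) :
    ⇑(f ^ n) = (⇑f)^[n] := by
  induction n with
  | zero => rfl
  | succ n ih =>
    rw [pow_succ, Function.iterate_succ]
    funext x
    exact congrFun ih (f x)

/-- If `α_f(z) = S` and `g = f^q`, then `⋃_{r=0}^{q−1} α_g(f^{−r}(z)) = S`. -/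
theorem statement6 {S : Type*} [MetricSpace S] (f : S ≃ₜ S) (q : ℕ) (hq : 1 ≤ q)
    (g : S ≃ₜ S) (hg : g = f ^ q) (z : S) (hz : alphaLimitOf f z = Set.univ) :
    (⋃ r ∈ Finset.range q, alphaLimitOf g ((⇑f.symm)^[r] z)) = Set.univ := by
  have hgsymm : ⇑g.symm = (⇑f.symm)^[q] := by
    have h1 : g.symm = (f.symm) ^ q := by
      rw [hg]
      show (f ^ q)⁻¹ = f⁻¹ ^ q
      rw [inv_pow]
    rw [h1, hom_coe_pow']
  apply Set.eq_univ_of_forall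
  intro x
  have hx : ∀ k : ℕ, x ∈ closure ((fun n : ℕ => (⇑f.symm)^[n] z) '' Set.Ici k) := by
    intro k
    have hx0 : x ∈ alphaLimitOf f z := by rw [hz]; trivial
    exact Set.mem_iInter.mp hx0 k
  have hsel : ∀ j : ℕ, ∃ n : ℕ, j ≤ n ∧ dist x ((⇑f.symm)^[n] z) < 1 / (j + 1) := by
    intro j
    have h := (Metric.mem_closure_iff.mp (hx j)) (1 / (j + 1)) (by positivity)
    obtain ⟨b, hb, hd⟩ := h
    obtain ⟨n, hn, rfl⟩ := hb
    exact ⟨n, hn, hd⟩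
  choose n hn hdist using hsel
  have : NeZero q := ⟨by omega⟩
  obtain ⟨r, hr⟩ := Finite.exists_infinite_fiber
    (fun j : ℕ => (⟨n j % q, Nat.mod_lt _ hq⟩ : Fin q))
  have hrinf : {j : ℕ | n j % q = r.val}.Infinite := by
    rw [← Set.infinite_coe_iff]
    refine Set.infinite_coe_iff.mpr ?_
    have := Set.infinite_coe_iff.mp hr
    refine this.mono ?_
    intro j hj
    simp only [Set.mem_preimage, Set.mem_singleton_iff] at hj
    simpa [Fin.ext_iff] using hj
  refine Set.mem_iUnion₂.mpr ⟨r.val, Finset.mem_range.mpr r.isLt, ?_⟩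
  rw [alphaLimitOf, omegaLimitOf, Set.mem_iInter]
  intro k
  rw [Metric.mem_closure_iff]
  intro ε hε
  obtain ⟨N, hN⟩ := exists_nat_one_div_lt hε
  obtain ⟨j, hj_mem, hj_gt⟩ := hrinf.exists_gt (max N (q * k + q))
  have hjN : N ≤ j := le_trans (le_max_left _ _) hj_gt.le
  have hjq : q * k + q ≤ j := le_trans (le_max_right _ _) hj_gt.le
  set m := n j / q with hm
  have hmk : k ≤ m := by
    have h1 : q * k + q ≤ n j := le_trans hjq (hn j)
    have := Nat.div_le_div_right (c := q) h1
    rw [hm]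
    calc k ≤ (q * k + q) / q := by
            rw [Nat.add_div_right _ (by omega), Nat.mul_div_cancel_left _ (by omega)]
            omega
      _ ≤ n j / q := Nat.div_le_div_right h1
  have heq : (⇑g.symm)^[m] ((⇑f.symm)^[r.val] z) = (⇑f.symm)^[n j] z := by
    rw [hgsymm, ← Function.iterate_mul, ← Function.iterate_add_apply]
    congr 1
    have hdm : q * m + n j % q = n j := hm ▸ Nat.div_add_mod (n j) q
    have hjm : n j % q = r.val := hj_mem
    omega
  refine ⟨(⇑g.symm)^[m] ((⇑f.symm)^[r.val] z), ⟨m, hmk, rfl⟩, ?_⟩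
  rw [heq]
  calc dist x ((⇑f.symm)^[n j] z) < 1 / (j + 1) := hdist j
    _ ≤ 1 / (N + 1) := by
        apply one_div_le_one_div_of_le (by positivity)
        linarith [(Nat.cast_le (α := ℝ)).mpr hjN]
    _ < ε := hN
end
end

section
/- Let h be a homeomorphism of T² admitting a lift ĥ to the vertical annulus A = (ℝ/ℤ) × ℝ (i.e. π̂ ∘ ĥ = h ∘ π̂) such that (1) ĥ(ŵ + (0,p)) = ĥ(ŵ) + (0,p) for all p ∈ ℤ and ŵ ∈ A, and (2) there is M > 0 with |pr₂(ĥⁿ(ŵ) − ŵ)| ≤ M for all n ∈ ℤ and all ŵ ∈ A. Then for any w, w′ ∈ T² with w ∈ ω_h(w′) and any ŵ ∈ π̂⁻¹(w), there exists ŵ′ ∈ π̂⁻¹(w′) such that ŵ ∈ ω_{ĥ}(ŵ′). -/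
open Filter Topology Set

noncomputable section

/-- Lifting of ω-limit points to the vertical annulus for a torus homeomorphism whose annulus
lift commutes with vertical integer translations and has uniformly bounded vertical
displacements. -/
theorem statement7 (h : Torus ≃ₜ Torus) (H : VertAnnulus ≃ₜ VertAnnulus)
    (hlift : IsLiftAnn h H)
    (hcomm : ∀ (w : VertAnnulus) (p : ℤ), H (w + (0, (p : ℝ))) = H w + (0, (p : ℝ)))
    (M : ℝ) (hM : 0 < M)
    (hbd : ∀ (n : ℤ) (w : VertAnnulus), |((H ^ n) w).2 - w.2| ≤ M)
    (w w' : Torus) (hw : w ∈ omegaLimitOf (⇑h) w')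
    (wh : VertAnnulus) (hwh : annProj wh = w) :
    ∃ wh' : VertAnnulus, annProj wh' = w' ∧ wh ∈ omegaLimitOf (⇑H) wh' := by
  classical
  -- iterate facts
  have hpow : ∀ (n : ℕ) (z : VertAnnulus), (H ^ n) z = (⇑H)^[n] z := by
    intro n
    induction n with
    | zero => intro z; rfl
    | succ n ih =>
      intro z
      rw [pow_succ', Function.iterate_succ_apply']
      exact congrArg H (ih z)
  have hliftn : ∀ (n : ℕ) (z : VertAnnulus),
      annProj ((⇑H)^[n] z) = (⇑h)^[n] (annProj z) := by
    intro n
    induction n with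
    | zero => intro z; rfl
    | succ n ih =>
      intro z
      rw [Function.iterate_succ_apply', Function.iterate_succ_apply', hlift, ih]
  have hcommn : ∀ (n : ℕ) (z : VertAnnulus) (q : ℤ),
      (⇑H)^[n] (z + (0, (q : ℝ))) = (⇑H)^[n] z + (0, (q : ℝ)) := by
    intro n
    induction n with
    | zero => intro z q; rfl
    | succ n ih =>
      intro z q
      rw [Function.iterate_succ_apply, Function.iterate_succ_apply, hcomm z q, ih]
  -- a lift of w'
  obtain ⟨b₀, hb₀⟩ := QuotientAddGroup.mk_surjective w'.2
  set z₀ : VertAnnulus := (w'.1, b₀) with hz₀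
  have hz₀proj : annProj z₀ = w' := by
    simp only [annProj, hz₀, hb₀]
  -- extract a sequence from the omega-limit hypothesis
  have hwk : ∀ k : ℕ, ∃ n : ℕ, k ≤ n ∧ dist ((⇑h)^[n] w') w < 1 / (k + 1) := by
    intro k
    have h1 : w ∈ closure ((fun n : ℕ => (⇑h)^[n] w') '' Set.Ici k) :=
      Set.mem_iInter.mp hw k
    rw [Metric.mem_closure_iff] at h1
    obtain ⟨y, hy, hd⟩ := h1 (1 / (k + 1)) (by positivity)
    obtain ⟨n, hn, rfl⟩ := hy
    exact ⟨n, hn, by rw [dist_comm]; exact hd⟩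
  choose ns hns hdist using hwk
  have htend : Tendsto (fun k => (⇑h)^[ns k] w') atTop (𝓝 w) := by
    rw [tendsto_iff_dist_tendsto_zero]
    refine squeeze_zero (fun k => dist_nonneg) (fun k => (hdist k).le) ?_
    exact tendsto_one_div_add_atTop_nhds_zero_nat
  -- the orbit of z₀ stays in a compact set
  set K : Set VertAnnulus :=
    (Set.univ : Set (AddCircle (1 : ℝ))) ×ˢ Set.Icc (z₀.2 - M) (z₀.2 + M) with hK
  have hKc : IsCompact K := isCompact_univ.prod isCompact_Icc
  have hmem : ∀ k, (⇑H)^[ns k] z₀ ∈ K := by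
    intro k
    refine ⟨Set.mem_univ _, ?_⟩
    have hb := hbd (ns k) z₀
    rw [zpow_natCast, hpow] at hb
    have hb' := abs_le.mp hb
    constructor <;> [linarith [hb'.1]; linarith [hb'.2]]
  obtain ⟨zl, hzlK, φ, hφ, hconv⟩ := hKc.tendsto_subseq hmem
  -- the limit projects to w
  have hcont : Continuous annProj :=
    continuous_fst.prodMk (continuous_quotient_mk'.comp continuous_snd)
  have hAz : annProj zl = w := by
    have h1 : Tendsto (fun j => annProj ((⇑H)^[ns (φ j)] z₀)) atTop (𝓝 (annProj zl)) :=
      (hcont.tendsto zl).comp hconv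
    have h2 : Tendsto (fun j => (⇑h)^[ns (φ j)] w') atTop (𝓝 (annProj zl)) := by
      simpa only [hliftn, hz₀proj] using h1
    have h3 : Tendsto (fun j => (⇑h)^[ns (φ j)] w') atTop (𝓝 w) :=
      htend.comp hφ.tendsto_atTop
    exact tendsto_nhds_unique h2 h3
  -- compare zl with wh
  have hfst : zl.1 = wh.1 := by
    have := congrArg Prod.fst (hAz.trans hwh.symm)
    simpa [annProj] using this
  have hsnd : ((zl.2 : ℝ) : AddCircle (1 : ℝ)) = ((wh.2 : ℝ) : AddCircle (1 : ℝ)) := by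
    have := congrArg Prod.snd (hAz.trans hwh.symm)
    simpa [annProj] using this
  obtain ⟨q, hq⟩ : ∃ q : ℤ, zl.2 = wh.2 + q := by
    rw [QuotientAddGroup.eq_iff_sub_mem] at hsnd
    obtain ⟨q, hq⟩ := AddSubgroup.mem_zmultiples_iff.mp hsnd
    refine ⟨q, ?_⟩
    simp only [zsmul_eq_mul, mul_one] at hq
    linarith
  -- define the desired lift of w'
  refine ⟨z₀ + (0, ((-q : ℤ) : ℝ)), ?_, ?_⟩
  · -- it projects to w'
    have hcoe : ((b₀ + ((-q : ℤ) : ℝ) : ℝ) : AddCircle (1 : ℝ)) = (b₀ : AddCircle (1 : ℝ)) := by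
      rw [QuotientAddGroup.eq_iff_sub_mem]
      refine AddSubgroup.mem_zmultiples_iff.mpr ⟨-q, by simp⟩
    have : (z₀ + (0, ((-q : ℤ) : ℝ))).1 = w'.1 := by simp [hz₀]
    refine Prod.ext this ?_
    show ((z₀.2 + ((-q : ℤ) : ℝ) : ℝ) : AddCircle (1 : ℝ)) = w'.2
    rw [show z₀.2 = b₀ from rfl, hcoe, hb₀]
  · -- wh is in the omega-limit set
    have hconv' : Tendsto (fun j => (⇑H)^[ns (φ j)] (z₀ + (0, ((-q : ℤ) : ℝ)))) atTop (𝓝 wh) := by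
      have heq : ∀ j, (⇑H)^[ns (φ j)] (z₀ + (0, ((-q : ℤ) : ℝ)))
          = (⇑H)^[ns (φ j)] z₀ + (0, ((-q : ℤ) : ℝ)) := fun j => hcommn _ _ _
    -- limit is zl + (0, -q) = wh
      have hlim : Tendsto (fun j => (⇑H)^[ns (φ j)] z₀ + (0, ((-q : ℤ) : ℝ))) atTop
          (𝓝 (zl + (0, ((-q : ℤ) : ℝ)))) := hconv.add tendsto_const_nhds
      have hwheq : zl + (0, ((-q : ℤ) : ℝ)) = wh := by
        refine Prod.ext ?_ ?_
        · show zl.1 + 0 = wh.1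
          rw [add_zero, hfst]
        · show zl.2 + ((-q : ℤ) : ℝ) = wh.2
          push_cast
          rw [hq]; ring
      rw [← hwheq]
      simpa only [heq] using hlim
    rw [omegaLimitOf, Set.mem_iInter]
    intro k
    apply mem_closure_of_tendsto hconv'
    filter_upwards [eventually_ge_atTop k] with j hj
    exact ⟨ns (φ j), le_trans (le_trans hj hφ.le_apply) (hns (φ j)), rfl⟩
end
end

section
/- Let f be a transitive homeomorphism of T². Suppose there is an integer q ≥ 1 such that h = f^q admits a lift ĥ to the vertical annulus A = (ℝ/ℤ) × ℝ satisfying (1) ĥ(ŵ + (0,p)) = ĥ(ŵ) + (0,p) for all p ∈ ℤ and ŵ ∈ A, and (2) there is M > 0 with |pr₂(ĥⁿ(ŵ) − ŵ)| ≤ M for all n ∈ ℤ and ŵ ∈ A. Then ĥ is non-wandering, i.e. every point of A is non-wandering for ĥ. -/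
open Filter Topology Set

noncomputable section

lemma homeoMul_apply {X : Type*} [TopologicalSpace X] (g k : X ≃ₜ X) (x : X) :
    (g * k) x = g (k x) := rfl

lemma homeoInv_coe {X : Type*} [TopologicalSpace X] (g : X ≃ₜ X) : ⇑(g⁻¹) = ⇑g.symm := rfl

lemma homeoPow_apply {X : Type*} [TopologicalSpace X] (g : X ≃ₜ X) (n : ℕ) (x : X) :
    (g ^ n) x = (⇑g)^[n] x := by
  induction n generalizing x with
  | zero => rfl
  | succ n ih =>
    rw [pow_succ, homeoMul_apply, Function.iterate_succ_apply, ih]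

lemma homeoZpow_add_apply {X : Type*} [TopologicalSpace X] (g : X ≃ₜ X) (a b : ℤ) (x : X) :
    (g ^ (a + b)) x = (g ^ a) ((g ^ b) x) := by
  rw [zpow_add]; rfl

section Semiconj
variable {X Y : Type*} [TopologicalSpace X] [TopologicalSpace Y]
  (π : X → Y) (G : X ≃ₜ X) (g : Y ≃ₜ Y)

lemma semiconj_symm (hsc : ∀ x, π (G x) = g (π x)) (x : X) :
    π (G.symm x) = g.symm (π x) := by
  apply g.injective
  rw [← hsc, G.apply_symm_apply, g.apply_symm_apply]

lemma semiconj_pow (hsc : ∀ x, π (G x) = g (π x)) (n : ℕ) (x : X) :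
    π ((G ^ n) x) = (g ^ n) (π x) := by
  induction n generalizing x with
  | zero => rfl
  | succ n ih =>
    rw [pow_succ, pow_succ, homeoMul_apply, homeoMul_apply, ih, hsc]

lemma semiconj_zpow (hsc : ∀ x, π (G x) = g (π x)) (k : ℤ) (x : X) :
    π ((G ^ k) x) = (g ^ k) (π x) := by
  cases k with
  | ofNat n => rw [Int.ofNat_eq_coe, zpow_natCast, zpow_natCast, semiconj_pow π G g hsc]
  | negSucc n =>
    rw [zpow_negSucc, zpow_negSucc, homeoInv_coe, homeoInv_coe]
    exact semiconj_symm π _ _ (semiconj_pow π G g hsc (n+1)) x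

end Semiconj

lemma annProj_eq_iff (x y : VertAnnulus) :
    annProj x = annProj y ↔ x.1 = y.1 ∧ ∃ p : ℤ, x.2 = y.2 + p := by
  unfold annProj
  rw [Prod.ext_iff]
  simp only [and_congr_right_iff]
  intro _
  constructor
  · intro hxy
    rw [QuotientAddGroup.eq_iff_sub_mem, AddSubgroup.mem_zmultiples_iff] at hxy
    obtain ⟨k, hk⟩ := hxy
    exact ⟨k, by rw [zsmul_eq_mul, mul_one] at hk; linarith⟩
  · rintro ⟨p, hp⟩
    rw [QuotientAddGroup.eq_iff_sub_mem, AddSubgroup.mem_zmultiples_iff]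
    exact ⟨p, by rw [zsmul_eq_mul, mul_one]; linarith⟩

lemma annProj_surj : Function.Surjective annProj := by
  rintro ⟨a, s⟩
  obtain ⟨t, rfl⟩ := QuotientAddGroup.mk_surjective s
  exact ⟨(a, t), rfl⟩

lemma annProj_isOpenMap : IsOpenMap annProj := by
  have : annProj = Prod.map id (fun t : ℝ => (t : AddCircle (1:ℝ))) := rfl
  rw [this]
  exact IsOpenMap.prodMap IsOpenMap.id QuotientAddGroup.isOpenMap_coe

lemma nontrivial_torus : Nontrivial Torus := by
  refine ⟨⟨(0, 0), (((1/2 : ℝ) : AddCircle (1:ℝ)), 0), ?_⟩⟩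
  intro hco
  have h2 : ((1/2 : ℝ) : AddCircle (1:ℝ)) = 0 := by
    have := congrArg Prod.fst hco
    simpa using this.symm
  rw [AddCircle.coe_eq_zero_iff] at h2
  obtain ⟨n, hn⟩ := h2
  rw [zsmul_eq_mul, mul_one] at hn
  have : (2 * n : ℤ) = (1 : ℤ) := by
    have : ((2 * n : ℤ) : ℝ) = ((1:ℤ) : ℝ) := by push_cast; linarith
    exact_mod_cast this
  omega

lemma vert_add_add (w : VertAnnulus) (a b : ℝ) :
    w + (0, a) + (0, b) = w + (0, a + b) := by
  ext
  · show w.1 + 0 + 0 = w.1 + 0; simp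
  · show w.2 + a + b = w.2 + (a + b); ring

lemma comm_pow (H : VertAnnulus ≃ₜ VertAnnulus)
    (hcomm : ∀ (w : VertAnnulus) (p : ℤ), H (w + (0, (p : ℝ))) = H w + (0, (p : ℝ)))
    (n : ℕ) (w : VertAnnulus) (p : ℤ) :
    (H ^ n) (w + (0, (p : ℝ))) = (H ^ n) w + (0, (p : ℝ)) := by
  induction n generalizing w with
  | zero => rfl
  | succ n ih =>
    rw [pow_succ, homeoMul_apply, homeoMul_apply, hcomm, ih]


/-- If `f` is a transitive torus homeomorphism and a power `h = f^q` admits an annulus lift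
commuting with vertical integer translations and with uniformly bounded vertical
displacements, then this lift is non-wandering. -/
theorem statement8 (f : Torus ≃ₜ Torus) (hf : IsTransitive f) (q : ℕ) (hq : 1 ≤ q)
    (h : Torus ≃ₜ Torus) (hh : h = f ^ q)
    (H : VertAnnulus ≃ₜ VertAnnulus) (hlift : IsLiftAnn h H)
    (hcomm : ∀ (w : VertAnnulus) (p : ℤ), H (w + (0, (p : ℝ))) = H w + (0, (p : ℝ)))
    (M : ℝ) (hM : 0 < M)
    (hbd : ∀ (n : ℤ) (w : VertAnnulus), |((H ^ n) w).2 - w.2| ≤ M) :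
    ∀ z : VertAnnulus, IsNonWanderingPt (⇑H) z := by
  intro z U hU
  obtain ⟨w, hw⟩ := hf
  -- shrunk neighborhood with bounded second coordinate
  set Uh : Set VertAnnulus :=
      interior U ∩ (Set.univ ×ˢ Set.Ioo (z.2 - 1) (z.2 + 1)) with hUhdef
  have hUho : IsOpen Uh :=
    isOpen_interior.inter (isOpen_univ.prod isOpen_Ioo)
  have hzUh : z ∈ Uh := by
    refine ⟨mem_interior_iff_mem_nhds.mpr hU, ⟨trivial, ?_, ?_⟩⟩ <;> simp
  have hUhU : Uh ⊆ U := fun x hx => interior_subset hx.1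
  have hUhsnd : ∀ x ∈ Uh, x.2 ∈ Set.Ioo (z.2 - 1) (z.2 + 1) := fun x hx => hx.2.2
  set U' : Set Torus := annProj '' Uh with hU'def
  have hU'o : IsOpen U' := annProj_isOpenMap Uh hUho
  have hU'ne : annProj z ∈ U' := ⟨z, hzUh, rfl⟩
  -- visit times
  set S : Set ℤ := {n : ℤ | (f ^ n) w ∈ U'} with hSdef
  have hSinf : S.Infinite := by
    by_contra hninf
    have hfin : S.Finite := Set.not_infinite.mp hninf
    have hF : ((fun n : ℤ => (f ^ n) w) '' S).Finite := hfin.image _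
    have hsub : U' ⊆ (fun n : ℤ => (f ^ n) w) '' S := by
      intro v hv
      by_contra hvF
      have hVo : IsOpen (U' \ ((fun n : ℤ => (f ^ n) w) '' S)) := hU'o.sdiff hF.isClosed
      obtain ⟨x, hxr, hxV⟩ := hw.exists_mem_open hVo ⟨v, hv, hvF⟩
      obtain ⟨n, rfl⟩ := hxr
      exact hxV.2 ⟨n, hxV.1, rfl⟩
    have hU'fin : U'.Finite := hF.subset hsub
    -- a finite nonempty open set gives an open singleton
    have hsing : IsOpen ({annProj z} : Set Torus) := by
      have h1 : IsOpen (U' \ (U' \ {annProj z})) :=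
        hU'o.sdiff (hU'fin.subset diff_subset).isClosed
      have h2 : U' \ (U' \ {annProj z}) = {annProj z} := by
        ext v
        simp only [mem_diff, mem_singleton_iff]
        constructor
        · rintro ⟨hvU, hv2⟩
          by_contra hne
          exact hv2 ⟨hvU, hne⟩
        · rintro rfl
          exact ⟨hU'ne, fun hc => hc.2 rfl⟩
      rwa [h2] at h1
    have hclopen : IsClopen ({annProj z} : Set Torus) := ⟨isClosed_singleton, hsing⟩
    rcases isClopen_iff.mp hclopen with hemp | huniv
    · exact absurd hemp (Set.singleton_ne_empty _)
    · haveI := nontrivial_torus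
      obtain ⟨a, b, hab⟩ := exists_pair_ne Torus
      have ha : a ∈ ({annProj z} : Set Torus) := huniv ▸ trivial
      have hb : b ∈ ({annProj z} : Set Torus) := huniv ▸ trivial
      exact hab (ha.trans hb.symm)
  -- pigeonhole mod q
  haveI : NeZero q := ⟨by omega⟩
  haveI hSi : Infinite ↥S := hSinf.to_subtype
  obtain ⟨r, hr⟩ := Finite.exists_infinite_fiber (fun x : ↥S => ((x : ℤ) : ZMod q))
  set T : Set ℤ := Subtype.val '' ((fun x : ↥S => ((x : ℤ) : ZMod q)) ⁻¹' {r}) with hTdef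
  have hTinf : T.Infinite :=
    (Set.infinite_coe_iff.mp hr).image (Set.injOn_of_injective Subtype.val_injective)
  have hTS : T ⊆ S := by rintro n ⟨x, _, rfl⟩; exact x.2
  have hTmod : ∀ n ∈ T, ((n : ZMod q)) = r := by rintro n ⟨x, hx, rfl⟩; exact hx
  obtain ⟨n₀, hn₀⟩ := hTinf.nonempty
  obtain ⟨wl, hwl⟩ := annProj_surj ((f ^ n₀) w)
  set m : ℤ → ℤ := fun n => (n - n₀) / q with hmdef
  have hqm : ∀ n ∈ T, (q : ℤ) * m n = n - n₀ := by
    intro n hn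
    apply Int.mul_ediv_cancel'
    have hc : ((n - n₀ : ℤ) : ZMod q) = 0 := by
      push_cast
      rw [hTmod n hn, hTmod n₀ hn₀]
      ring
    exact_mod_cast (ZMod.intCast_zmod_eq_zero_iff_dvd _ _).mp hc
  have horb : ∀ n ∈ T, annProj ((H ^ m n) wl) = (f ^ n) w := by
    intro n hn
    rw [semiconj_zpow annProj H h hlift, hwl, hh, ← zpow_natCast f q, ← zpow_mul,
      ← homeoZpow_add_apply, hqm n hn, sub_add_cancel]
  have hchoice : ∀ n : ℤ, ∃ u : VertAnnulus, n ∈ T → (u ∈ Uh ∧ annProj u = (f ^ n) w) := by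
    intro n
    by_cases hn : n ∈ T
    · obtain ⟨u, hu, he⟩ := hTS hn
      exact ⟨u, fun _ => ⟨hu, he⟩⟩
    · exact ⟨z, fun hc => absurd hc hn⟩
  choose ul hul using hchoice
  have hdeck : ∀ n : ℤ, ∃ P : ℤ, n ∈ T → (H ^ m n) wl = ul n + (0, (P : ℝ)) := by
    intro n
    by_cases hn : n ∈ T
    · have heq : annProj ((H ^ m n) wl) = annProj (ul n) := by
        rw [horb n hn, (hul n hn).2]
      rw [annProj_eq_iff] at heq
      obtain ⟨h1, Q, h2⟩ := heq
      refine ⟨Q, fun _ => ?_⟩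
      ext
      · show ((H ^ m n) wl).1 = (ul n).1 + 0
        rw [h1, add_zero]
      · exact h2
    · exact ⟨0, fun hc => absurd hc hn⟩
  choose P hP using hdeck
  set C : ℝ := M + |wl.2 - z.2| + 1 with hC
  have hPbd : ∀ n ∈ T, |(P n : ℝ)| ≤ C := by
    intro n hn
    have h1 := hbd (m n) wl
    have h2 : ((H ^ m n) wl).2 = (ul n).2 + (P n : ℝ) := by rw [hP n hn]; rfl
    have h3 := hUhsnd _ (hul n hn).1
    obtain ⟨h3a, h3b⟩ := h3
    have h5 : wl.2 - z.2 ≤ |wl.2 - z.2| := le_abs_self _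
    have h6 : -|wl.2 - z.2| ≤ wl.2 - z.2 := neg_abs_le _
    rw [abs_le] at h1 ⊢
    constructor <;> [linarith ; linarith]
  set K : ℤ := ⌈C⌉ with hK
  have hmemIcc : ∀ x : ↥T, P (x : ℤ) ∈ Set.Icc (-K) K := by
    intro x
    have hb := hPbd (x : ℤ) x.2
    have habs : |P (x : ℤ)| ≤ K := by
      have hcast : (|P (x : ℤ)| : ℝ) ≤ (K : ℝ) := by
        push_cast
        exact hb.trans (Int.le_ceil C)
      exact_mod_cast hcast
    rw [abs_le] at habs
    exact habs
  haveI hTi : Infinite ↥T := hTinf.to_subtype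
  haveI : Finite ↥(Set.Icc (-K) K) := (Set.finite_Icc _ _).to_subtype
  obtain ⟨Pv, hfib⟩ := Finite.exists_infinite_fiber
      (fun x : ↥T => (⟨P (x : ℤ), hmemIcc x⟩ : ↥(Set.Icc (-K) K)))
  haveI := hfib
  obtain ⟨x, y, hxy⟩ := exists_pair_ne
      ↥((fun x : ↥T => (⟨P (x : ℤ), hmemIcc x⟩ : ↥(Set.Icc (-K) K))) ⁻¹' {Pv})
  have hpair : ∃ n₁ n₂ : ℤ, n₁ ∈ T ∧ n₂ ∈ T ∧ n₁ < n₂ ∧ P n₁ = P n₂ := by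
    have hxT : ((x : ↥T) : ℤ) ∈ T := (x : ↥T).2
    have hyT : ((y : ↥T) : ℤ) ∈ T := (y : ↥T).2
    have hPeq : P ((x : ↥T) : ℤ) = P ((y : ↥T) : ℤ) := by
      have hx' : (⟨P ((x : ↥T) : ℤ), hmemIcc _⟩ : ↥(Set.Icc (-K) K)) = Pv := x.2
      have hy' : (⟨P ((y : ↥T) : ℤ), hmemIcc _⟩ : ↥(Set.Icc (-K) K)) = Pv := y.2
      have := hx'.trans hy'.symm
      exact congrArg Subtype.val this
    have hne : ((x : ↥T) : ℤ) ≠ ((y : ↥T) : ℤ) := by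
      intro hc
      exact hxy (Subtype.ext (Subtype.ext hc))
    rcases lt_or_gt_of_ne hne with hlt | hgt
    · exact ⟨_, _, hxT, hyT, hlt, hPeq⟩
    · exact ⟨_, _, hyT, hxT, hgt, hPeq.symm⟩
  obtain ⟨n₁, n₂, hT1, hT2, hlt, hPP⟩ := hpair
  set d : ℤ := m n₂ - m n₁ with hd
  have hqd : (q : ℤ) * d = n₂ - n₁ := by
    have e1 := hqm n₁ hT1
    have e2 := hqm n₂ hT2
    rw [hd, mul_sub, e1, e2]
    ring
  have hdpos : 0 < d := by
    by_contra hc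
    push_neg at hc
    have hq0 : (0:ℤ) < (q : ℤ) := by exact_mod_cast hq
    have : (q : ℤ) * d ≤ 0 := mul_nonpos_of_nonneg_of_nonpos hq0.le hc
    omega
  set N : ℕ := d.toNat with hNdef
  have hNd : (N : ℤ) = d := Int.toNat_of_nonneg hdpos.le
  have hN1 : 1 ≤ N := by omega
  refine ⟨N, hN1, ul n₂, ⟨ul n₁, hUhU (hul n₁ hT1).1, ?_⟩, hUhU (hul n₂ hT2).1⟩
  rw [← homeoPow_apply]
  have e1 := hP n₁ hT1
  have e2 := hP n₂ hT2
  have key : ul n₁ = (H ^ m n₁) wl + (0, ((-(P n₁) : ℤ) : ℝ)) := by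
    rw [e1, vert_add_add]
    push_cast
    simp
  rw [key, comm_pow H hcomm]
  have e3 : (H ^ N) ((H ^ m n₁) wl) = (H ^ m n₂) wl := by
    have hsum : (N : ℤ) + m n₁ = m n₂ := by rw [hNd, hd]; ring
    rw [← zpow_natCast H N, ← homeoZpow_add_apply, hsum]
  rw [e3, e2, vert_add_add, hPP]
  push_cast
  simp
end
end

section
/- Let f be a homeomorphism of a metric space X, let q ≥ 1 and r ≥ 0 be integers and set g = f^q. If z ∈ ω_g(f^r(z)), then z ∈ ω_g(z). -/
open Filter Topology Set

noncomputable section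

lemma homeomorph_coe_pow {X : Type*} [TopologicalSpace X] (f : X ≃ₜ X) :
    ∀ n : ℕ, ⇑(f ^ n) = (⇑f)^[n]
  | 0 => rfl
  | (n + 1) => by
    ext x
    have : (f ^ (n + 1)) x = (f ^ n) (f x) := by rw [pow_succ]; rfl
    rw [this, homeomorph_coe_pow f n, Function.iterate_succ_apply]

lemma omega_mem_image {X : Type*} [TopologicalSpace X] {T h : X → X} (hc : Continuous h)
    (hcomm : ∀ x, h (T x) = T (h x)) {y x : X}
    (hx : x ∈ omegaLimitOf T y) : h x ∈ omegaLimitOf T (h y) := by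
  have hs : ∀ (n : ℕ) (w : X), h (T^[n] w) = T^[n] (h w) := fun n =>
    (Function.Semiconj.iterate_right hcomm n)
  simp only [omegaLimitOf, mem_iInter] at hx ⊢
  intro k
  have h1 : h x ∈ closure (h '' ((fun n : ℕ => T^[n] y) '' Ici k)) :=
    image_closure_subset_closure_image hc (mem_image_of_mem h (hx k))
  refine closure_mono ?_ h1
  rintro _ ⟨_, ⟨n, hn, rfl⟩, rfl⟩
  exact ⟨n, hn, (hs n y).symm⟩

lemma omega_trans {X : Type*} [TopologicalSpace X] {T : X → X} (hT : Continuous T)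
    {x y : X} (hx : x ∈ omegaLimitOf T y) : omegaLimitOf T x ⊆ omegaLimitOf T y := by
  intro w hw
  simp only [omegaLimitOf, mem_iInter] at hx hw ⊢
  intro k
  have key : ∀ n : ℕ, T^[n] x ∈ closure ((fun m : ℕ => T^[m] y) '' Ici k) := by
    intro n
    have h1 : T^[n] x ∈ closure (T^[n] '' ((fun m : ℕ => T^[m] y) '' Ici k)) :=
      image_closure_subset_closure_image (hT.iterate n) (mem_image_of_mem _ (hx k))
    refine closure_mono ?_ h1
    rintro _ ⟨_, ⟨m, hm, rfl⟩, rfl⟩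
    exact ⟨n + m, le_trans hm (Nat.le_add_left m n),
      Function.iterate_add_apply T n m y⟩
  refine closure_minimal ?_ isClosed_closure (hw k)
  rintro _ ⟨n, _, rfl⟩
  exact key n

lemma omega_iterate_subset {X : Type*} [TopologicalSpace X] (T : X → X) (r : ℕ) (y : X) :
    omegaLimitOf T (T^[r] y) ⊆ omegaLimitOf T y := by
  intro w hw
  simp only [omegaLimitOf, mem_iInter] at hw ⊢
  intro k
  refine closure_mono ?_ (hw k)
  rintro _ ⟨n, hn, rfl⟩
  exact ⟨n + r, le_trans hn (Nat.le_add_right n r),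
    Function.iterate_add_apply T n r y⟩

/-- If `z ∈ ω_g(f^r(z))` where `g = f^q`, then `z ∈ ω_g(z)`. -/
theorem statement12 {X : Type*} [MetricSpace X] (f : X ≃ₜ X) (q : ℕ) (hq : 1 ≤ q) (r : ℕ)
    (g : X ≃ₜ X) (hg : g = f ^ q) (z : X)
    (hz : z ∈ omegaLimitOf (⇑g) ((⇑f)^[r] z)) :
    z ∈ omegaLimitOf (⇑g) z := by
  have hgq : ⇑g = (⇑f)^[q] := by rw [hg, homeomorph_coe_pow]
  have hcomm : ∀ x : X, (⇑f)^[r] (g x) = g ((⇑f)^[r] x) := by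
    intro x
    rw [hgq, ← Function.iterate_add_apply, Nat.add_comm, Function.iterate_add_apply]
  have claim : ∀ j : ℕ, z ∈ omegaLimitOf (⇑g) ((⇑f)^[(j + 1) * r] z) := by
    intro j
    induction j with
    | zero => simpa using hz
    | succ j ih =>
      have h1 : (⇑f)^[r] z ∈ omegaLimitOf (⇑g) ((⇑f)^[r] ((⇑f)^[(j + 1) * r] z)) :=
        omega_mem_image (f.continuous.iterate r) hcomm ih
      have h2 : (⇑f)^[r] ((⇑f)^[(j + 1) * r] z) = (⇑f)^[(j + 1 + 1) * r] z := by
        rw [← Function.iterate_add_apply]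
        ring_nf
      rw [h2] at h1
      exact omega_trans g.continuous h1 hz
  have hfin := claim (q - 1)
  have hq' : (q - 1 + 1) * r = q * r := by rw [Nat.sub_add_cancel hq]
  rw [hq', Function.iterate_mul, ← hgq] at hfin
  exact omega_iterate_subset (⇑g) r z hfin
end
end

section
/- Let ĥ be a homeomorphism of the vertical annulus A = (ℝ/ℤ) × ℝ which commutes with the vertical integer translations (ĥ(ŵ + (0,p)) = ĥ(ŵ) + (0,p) for all p ∈ ℤ). Suppose there is a compact connected set K ⊂ A with ĥ(K) = K which separates the two ends of A, i.e. K ⊂ (ℝ/ℤ) × [−M₀, M₀] for some M₀ > 0 and the two components of A ∖ K containing (ℝ/ℤ) × (M₀, ∞) and (ℝ/ℤ) × (−∞, −M₀) are distinct. Then there exists M′ > 0 such that |pr₂(ĥⁿ(ŵ) − ŵ)| < M′ for all ŵ ∈ A and all n ∈ ℤ. -/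
/-!
Since `ĥ` commutes with the vertical integer translations, it maps some point of the upper end
`{pr₂ > M₀}` to a point of that end; the image of the (connected) upper end therefore lies in the
component of `A ∖ K` containing the upper end, which is not the one containing the lower end. So no
point above `K` is sent below `K`, and translating back by integers shows that no point moves down
by more than `2 M₀ + 1`. The same applied to `ĥ⁻¹` bounds upward motion, and every iterate `ĥⁿ`
satisfies the hypotheses on `ĥ`.
-/

open Filter Topology Set

noncomputable section

def Homeomorph.setStabilizer {X : Type*} [TopologicalSpace X] (K : Set X) :
    Subgroup (X ≃ₜ X) where
  carrier := {f | ⇑f '' K = K}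
  one_mem' := image_id K
  mul_mem' {f g} hf hg := by
    change (⇑f ∘ ⇑g) '' K = K
    rw [image_comp, hg, hf]
  inv_mem' {f} hf := by
    change ⇑f.symm '' K = K
    calc ⇑f.symm '' K = ⇑f.symm '' (⇑f '' K) := by rw [hf]
      _ = K := f.symm_image_image K

lemma Homeomorph.mapsTo_compl_of_image_eq {X : Type*} [TopologicalSpace X] {f : X ≃ₜ X}
    {K : Set X} (hf : ⇑f '' K = K) : MapsTo f Kᶜ Kᶜ := by
  simpa only [image_compl_eq f.bijective, hf] using mapsTo_image f Kᶜ

lemma isPreconnected_upper_half (M : ℝ) : IsPreconnected {p : VertAnnulus | M < p.2} := by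
  rw [show {p : VertAnnulus | M < p.2} = univ ×ˢ Ioi M by rw [univ_prod]; rfl]
  exact isPreconnected_univ.prod isPreconnected_Ioi

section VerticalDisplacement

variable {G : VertAnnulus ≃ₜ VertAnnulus}
  (hcomm : ∀ (w : VertAnnulus) (p : ℤ), G (w + (0, (p : ℝ))) = G w + (0, (p : ℝ)))
include hcomm

lemma image_upper_half_subset_connectedComponentIn {F : Set VertAnnulus} (hGF : MapsTo G F F)
    {M : ℝ} (hMF : {p : VertAnnulus | M < p.2} ⊆ F) {w : VertAnnulus} (hw : M < w.2) :
    ⇑G '' {p | M < p.2} ⊆ connectedComponentIn F w := by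
  obtain ⟨n, hn⟩ := exists_nat_gt (M - (G w).2)
  have hup : M < (w + (0, ((n : ℤ) : ℝ))).2 := by
    simp only [Prod.snd_add, Int.cast_natCast]
    linarith [n.cast_nonneg (α := ℝ)]
  have hGup : G (w + (0, ((n : ℤ) : ℝ))) ∈ connectedComponentIn F w := by
    rw [hcomm]
    refine (isPreconnected_upper_half M).subset_connectedComponentIn hw hMF ?_
    simp only [mem_ofPred_eq, Prod.snd_add, Int.cast_natCast]
    linarith
  rw [connectedComponentIn_eq hGup]
  exact ((isPreconnected_upper_half M).image _ G.continuous.continuousOn).subset_connectedComponentIn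
    (mem_image_of_mem _ hup) ((image_mono hMF).trans hGF.image_subset)

variable {K : Set VertAnnulus} (hGK : MapsTo G Kᶜ Kᶜ) {M₀ : ℝ}
  (hKsub : K ⊆ {p : VertAnnulus | |p.2| ≤ M₀})
  (hsep : ∀ p q : VertAnnulus, M₀ < p.2 → q.2 < -M₀ →
    connectedComponentIn Kᶜ p ≠ connectedComponentIn Kᶜ q)
include hGK hKsub hsep

lemma neg_le_snd_apply_of_lt_snd {w : VertAnnulus} (hw : M₀ < w.2) : -M₀ ≤ (G w).2 := by
  by_contra! h
  have hupper : {p : VertAnnulus | M₀ < p.2} ⊆ Kᶜ := fun p hp hpK =>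
    (hp.trans_le (le_abs_self p.2)).not_ge (hKsub hpK)
  exact hsep w (G w) hw h (connectedComponentIn_eq
    (image_upper_half_subset_connectedComponentIn hcomm hGK hupper hw (mem_image_of_mem _ hw)))

lemma sub_le_snd_apply (w : VertAnnulus) : w.2 - (2 * M₀ + 1) ≤ (G w).2 := by
  set a : ℤ := ⌈w.2 - M₀⌉ - 1
  have h := neg_le_snd_apply_of_lt_snd hcomm hGK hKsub hsep (w := w + (0, ((-a : ℤ) : ℝ)))
    (by simp only [a, Prod.snd_add]; push_cast; linarith [Int.ceil_lt_add_one (w.2 - M₀)])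
  rw [hcomm, Prod.snd_add] at h
  simp only [a] at h
  push_cast at h
  linarith [Int.le_ceil (w.2 - M₀)]

end VerticalDisplacement

lemma abs_snd_apply_sub_snd_le {G : VertAnnulus ≃ₜ VertAnnulus}
    (hcomm : ∀ (w : VertAnnulus) (p : ℤ), G (w + (0, (p : ℝ))) = G w + (0, (p : ℝ)))
    {K : Set VertAnnulus} (hGK : ⇑G '' K = K) {M₀ : ℝ}
    (hKsub : K ⊆ {p : VertAnnulus | |p.2| ≤ M₀})
    (hsep : ∀ p q : VertAnnulus, M₀ < p.2 → q.2 < -M₀ →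
      connectedComponentIn Kᶜ p ≠ connectedComponentIn Kᶜ q)
    (w : VertAnnulus) : |(G w).2 - w.2| ≤ 2 * M₀ + 1 := by
  have hcomm_symm : ∀ (v : VertAnnulus) (p : ℤ),
      G.symm (v + (0, (p : ℝ))) = G.symm v + (0, (p : ℝ)) := fun v p =>
    G.injective (by rw [hcomm, G.apply_symm_apply, G.apply_symm_apply])
  have hGK_symm : ⇑G.symm '' K = K := (Homeomorph.setStabilizer K).inv_mem hGK
  have hlow := sub_le_snd_apply hcomm (Homeomorph.mapsTo_compl_of_image_eq hGK) hKsub hsep w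
  have hhigh := sub_le_snd_apply hcomm_symm (Homeomorph.mapsTo_compl_of_image_eq hGK_symm)
    hKsub hsep (G w)
  rw [G.symm_apply_apply] at hhigh
  rw [abs_le]
  constructor <;> linarith

theorem statement13_general (H : VertAnnulus ≃ₜ VertAnnulus)
    (hcomm : ∀ (w : VertAnnulus) (p : ℤ), H (w + (0, (p : ℝ))) = H w + (0, (p : ℝ)))
    (K : Set VertAnnulus) (hKinv : ⇑H '' K = K)
    (M₀ : ℝ) (hKsub : K ⊆ {p : VertAnnulus | |p.2| ≤ M₀})
    (hsep : ∀ p q : VertAnnulus, M₀ < p.2 → q.2 < -M₀ →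
      connectedComponentIn Kᶜ p ≠ connectedComponentIn Kᶜ q) :
    ∃ M' : ℝ, 0 < M' ∧ ∀ (w : VertAnnulus) (n : ℤ), |((H ^ n) w).2 - w.2| < M' := by
  have hcomm_zpow (n : ℤ) (w : VertAnnulus) (p : ℤ) :
      (H ^ n) (w + (0, (p : ℝ))) = (H ^ n) w + (0, (p : ℝ)) := by
    have hH : Commute H (Homeomorph.addRight ((0, (p : ℝ)) : VertAnnulus)) :=
      Homeomorph.ext fun v => hcomm v p
    exact DFunLike.congr_fun (hH.zpow_left n) w
  have hbound (n : ℤ) (w : VertAnnulus) : |((H ^ n) w).2 - w.2| ≤ 2 * M₀ + 1 :=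
    abs_snd_apply_sub_snd_le (hcomm_zpow n) ((Homeomorph.setStabilizer K).zpow_mem hKinv n)
      hKsub hsep w
  refine ⟨2 * M₀ + 2, ?_, fun w n => (hbound n w).trans_lt (by linarith)⟩
  linarith [(abs_nonneg _).trans (hbound 0 0)]

/-- An annulus homeomorphism commuting with vertical integer translations and preserving a
compact connected set separating the two ends of the annulus has uniformly bounded vertical
displacements. -/
theorem statement13 (H : VertAnnulus ≃ₜ VertAnnulus)
    (hcomm : ∀ (w : VertAnnulus) (p : ℤ), H (w + (0, (p : ℝ))) = H w + (0, (p : ℝ)))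
    (K : Set VertAnnulus) (hKc : IsCompact K) (hKconn : IsConnected K) (hKinv : ⇑H '' K = K)
    (M₀ : ℝ) (hM₀ : 0 < M₀) (hKsub : K ⊆ {p : VertAnnulus | |p.2| ≤ M₀})
    (hsep : ∀ p q : VertAnnulus, M₀ < p.2 → q.2 < -M₀ →
      connectedComponentIn Kᶜ p ≠ connectedComponentIn Kᶜ q) :
    ∃ M' : ℝ, 0 < M' ∧ ∀ (w : VertAnnulus) (n : ℤ), |((H ^ n) w).2 - w.2| < M' :=
  statement13_general H hcomm K hKinv M₀ hKsub hsep
end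
end
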